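/- For real numbers u_1, …, u_N and any κ > 0: ∫_{-κ}^{κ} |Σ_n u_n e(nη)|² dη ≪ ∫_{-∞}^{∞} |κ Σ_{x < n ≤ x + 1/(2κ)} u_n|² dx, with an absolute implied constant. -/

import Mathlib

/-!
Put `h = 1 / (2κ)` and let `tent h t = max 0 (h - |t|)`. Its Fourier transform is the Fejér
kernel `fejer h η = h² sinc² (π h η)`, which by Jordan's inequality is at least `(π κ)⁻²` on
`[-κ, κ]`. So the left-hand side is at most `(π κ)² ∫ fejer h η |∑ uₙ e(nη)|² dη`, and Fourier
inversion turns this integral into the quadratic form `∑ₘ ∑ₙ uₘ uₙ tent h (m - n)`. Since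
`tent h (m - n)` is the length of `[m - h, m) ∩ [n - h, n)`, the same quadratic form is
`∫ (∑_{x < n ≤ x + h} uₙ)² dx`. Hence `C = π²`.
-/

open Complex MeasureTheory

/-- e(u) = e^{2πiu}. -/
noncomputable def e (u : ℝ) : ℂ := Complex.exp (2 * Real.pi * Complex.I * u)

open scoped Real FourierTransform ComplexConjugate

lemma norm_e (u : ℝ) : ‖e u‖ = 1 := by
  rw [e, Complex.norm_exp]
  simp

@[fun_prop]
lemma continuous_e : Continuous e := by
  unfold e; fun_prop

lemma e_mul_conj_e (x y : ℝ) : e x * conj (e y) = e (x - y) := by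
  rw [e, e, e, ← Complex.exp_conj, ← Complex.exp_add]
  congr 1
  simp only [map_mul, map_ofNat, Complex.conj_ofReal, Complex.conj_I]
  push_cast
  ring

noncomputable def tent (h t : ℝ) : ℝ := max 0 (h - |t|)

noncomputable def fejer (h η : ℝ) : ℝ := h ^ 2 * Real.sinc (π * h * η) ^ 2

namespace Real

lemma sinc_mul_self (x : ℝ) : sinc x * x = sin x := by
  rcases eq_or_ne x 0 with rfl | hx
  · simp
  · rw [sinc_of_ne_zero hx, div_mul_cancel₀ _ hx]

lemma sinc_sq_mul_one_add_sq_le_two (x : ℝ) : sinc x ^ 2 * (1 + x ^ 2) ≤ 2 := by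
  have h1 : sinc x ^ 2 ≤ 1 := by
    rw [sq_le_one_iff_abs_le_one]; exact abs_sinc_le_one x
  have h2 : (sinc x * x) ^ 2 ≤ 1 := by rw [sinc_mul_self]; exact sin_sq_le_one x
  nlinarith

lemma sinc_abs (x : ℝ) : sinc |x| = sinc x := by
  rcases abs_cases x with ⟨hx, _⟩ | ⟨hx, _⟩ <;> simp [hx, sinc_neg]

lemma two_div_pi_le_sinc {x : ℝ} (hx : |x| ≤ π / 2) : 2 / π ≤ sinc x := by
  rw [← sinc_abs]
  rcases (abs_nonneg x).eq_or_lt with h0 | hpos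
  · rw [← h0, sinc_zero, div_le_one pi_pos]; linarith [pi_gt_three]
  · rw [sinc_of_ne_zero hpos.ne', le_div_iff₀ hpos]
    exact mul_le_sin hpos.le hx

end Real

section Tent

variable {h : ℝ}

lemma tent_neg (h t : ℝ) : tent h (-t) = tent h t := by simp [tent]

lemma tent_of_abs_le {t : ℝ} (ht : |t| ≤ h) : tent h t = h - |t| :=
  max_eq_right (sub_nonneg.2 ht)

lemma tent_eq_zero_of_le_abs {t : ℝ} (ht : h ≤ |t|) : tent h t = 0 :=
  max_eq_left (sub_nonpos.2 ht)

@[fun_prop]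
lemma continuous_tent (h : ℝ) : Continuous (tent h) := by
  unfold tent; fun_prop

lemma support_tent_subset (h : ℝ) : Function.support (tent h) ⊆ Set.Ioo (-h) h := by
  intro t ht
  rw [Set.mem_Ioo, ← abs_lt]
  by_contra hle
  exact ht (tent_eq_zero_of_le_abs (not_lt.1 hle))

lemma integrable_tent (h : ℝ) : Integrable (tent h) :=
  (continuous_tent h).integrable_of_hasCompactSupport
    (HasCompactSupport.intro' isCompact_Icc isClosed_Icc
      fun _ ht => Function.notMem_support.1 fun hs =>
        ht (Set.Ioo_subset_Icc_self (support_tent_subset h hs)))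

lemma volume_real_Ico_inter_Ico (h a b : ℝ) :
    volume.real (Set.Ico (a - h) a ∩ Set.Ico (b - h) b) = tent h (a - b) := by
  rw [Set.Ico_inter_Ico, Real.volume_real_Ico, tent, max_comm]
  congr 1
  rcases le_total a b with hab | hab
  · rw [abs_of_nonpos (sub_nonpos.2 hab), min_eq_left hab, max_eq_right (by linarith)]; ring
  · rw [abs_of_nonneg (sub_nonneg.2 hab), min_eq_right hab, max_eq_left (by linarith)]; ring

end Tent

section Fejer

variable {h : ℝ}

lemma fejer_nonneg (h η : ℝ) : 0 ≤ fejer h η := by unfold fejer; positivity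

@[fun_prop]
lemma continuous_fejer (h : ℝ) : Continuous (fejer h) := by
  unfold fejer; fun_prop

lemma fejer_le (h η : ℝ) : fejer h η ≤ 2 * h ^ 2 * (1 + (π * h * η) ^ 2)⁻¹ := by
  rw [fejer, le_mul_inv_iff₀ (by positivity), mul_assoc, mul_comm 2]
  exact mul_le_mul_of_nonneg_left (Real.sinc_sq_mul_one_add_sq_le_two _) (sq_nonneg h)

lemma integrable_fejer (hh : 0 < h) : Integrable (fejer h) := by
  have hdom : Integrable fun η : ℝ => 2 * h ^ 2 * (1 + (π * h * η) ^ 2)⁻¹ :=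
    (integrable_inv_one_add_sq.comp_mul_left' (by positivity : π * h ≠ 0)).const_mul _
  refine hdom.mono' (continuous_fejer h).aestronglyMeasurable (.of_forall fun η => ?_)
  rw [Real.norm_of_nonneg (fejer_nonneg h η)]
  exact fejer_le h η

lemma one_le_pi_mul_sq_mul_fejer {κ η : ℝ} (hκ : 0 < κ) (hη : |η| ≤ κ) :
    1 ≤ (π * κ) ^ 2 * fejer (1 / (2 * κ)) η := by
  set h := 1 / (2 * κ) with hh
  have hhκ : h * κ = 1 / 2 := by rw [hh]; field_simp
  have hx : |π * h * η| ≤ π / 2 := by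
    rw [abs_mul, abs_of_pos (by positivity : 0 < π * h)]
    calc π * h * |η| ≤ π * h * κ := by gcongr
      _ = π / 2 := by rw [mul_assoc, hhκ]; ring
  have hsinc := pow_le_pow_left₀ (by positivity) (Real.two_div_pi_le_sinc hx) 2
  calc 1 = (π * κ) ^ 2 * (h ^ 2 * (2 / π) ^ 2) := by
        field_simp
        nlinarith [hhκ]
    _ ≤ (π * κ) ^ 2 * fejer h η := by unfold fejer; gcongr

end Fejer

lemma integral_sub_mul_cos (h c : ℝ) :
    ∫ v in (0 : ℝ)..h, (h - v) * Real.cos (c * v) = h ^ 2 / 2 * Real.sinc (c * h / 2) ^ 2 := by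
  rcases eq_or_ne c 0 with rfl | hc
  · simp [intervalIntegral.integral_sub intervalIntegrable_const
      intervalIntegral.intervalIntegrable_id]
    ring
  have hderiv : ∀ v ∈ Set.uIcc 0 h, HasDerivAt
      (fun v => (h - v) * Real.sin (c * v) / c - Real.cos (c * v) / c ^ 2)
      ((h - v) * Real.cos (c * v)) v := by
    intro v _
    have hlin : HasDerivAt (fun v => c * v) c v := by simpa using (hasDerivAt_id v).const_mul c
    have hsub : HasDerivAt (fun v => h - v) (-1) v := by
      simpa using (hasDerivAt_id' v).const_sub h
    refine (((hsub.fun_mul hlin.sin).div_const c).fun_sub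
      (hlin.cos.div_const (c ^ 2))).congr_deriv ?_
    field_simp
    ring
  rw [intervalIntegral.integral_eq_sub_of_hasDerivAt hderiv
    (Continuous.intervalIntegrable (by fun_prop) _ _)]
  have hsinc := Real.sinc_mul_self (c * h / 2)
  have hcos := Real.cos_two_mul_eq_one_sub (c * h / 2)
  rw [show 2 * (c * h / 2) = c * h by ring] at hcos
  simp only [sub_self, zero_mul, zero_div, mul_zero, Real.sin_zero, Real.cos_zero, hcos]
  rw [← hsinc]
  field_simp
  ring

lemma fourier_tent {h : ℝ} (hh : 0 ≤ h) (η : ℝ) :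
    𝓕 (fun t => (tent h t : ℂ)) η = fejer h η := by
  -- `tent h` is even, so the Fourier integral folds onto `[0, h]` as a cosine integral.
  set g : ℝ → ℂ := fun v => Complex.exp (↑(-2 * π * v * η) * I) • (tent h v : ℂ) with hg_def
  have hg : Continuous g := by fun_prop
  have hsupp : Function.support g ⊆ Set.Ioc (-h) h := fun v hv =>
    Set.Ioo_subset_Ioc_self <| support_tent_subset h fun h0 => hv (by simp [g, h0])
  have heven (v : ℝ) : g v + g (-v) = ((2 * (tent h v * Real.cos (2 * π * η * v)) : ℝ) : ℂ) := by
    have hθ : ((-2 * π * v * η : ℝ) : ℂ) * I = -(2 * π * η * v) * I := by push_cast; ring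
    have hθ' : ((-2 * π * -v * η : ℝ) : ℂ) * I = (2 * π * η * v) * I := by push_cast; ring
    simp only [hg_def, smul_eq_mul, tent_neg]
    rw [hθ, hθ']
    push_cast
    linear_combination -(tent h v : ℂ) * Complex.two_cos (2 * π * η * v)
  calc 𝓕 (fun t => (tent h t : ℂ)) η = ∫ v in (-h)..h, g v := by
        rw [Real.fourier_real_eq_integral_exp_smul,
          intervalIntegral.integral_eq_integral_of_support_subset hsupp]
    _ = ∫ v in (0 : ℝ)..h, (g v + g (-v)) := by
        rw [intervalIntegral.integral_add (g := fun v => g (-v)) (hg.intervalIntegrable _ _)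
            ((hg.comp continuous_neg).intervalIntegrable _ _),
          intervalIntegral.integral_comp_neg, neg_zero, add_comm,
          intervalIntegral.integral_add_adjacent_intervals (hg.intervalIntegrable _ _)
            (hg.intervalIntegrable _ _)]
    _ = ∫ v in (0 : ℝ)..h, ((2 * ((h - v) * Real.cos (2 * π * η * v)) : ℝ) : ℂ) := by
        refine intervalIntegral.integral_congr fun v hv => ?_
        rw [Set.uIcc_of_le hh] at hv
        rw [heven, tent_of_abs_le (abs_le.2 ⟨by linarith [hv.1], hv.2⟩), abs_of_nonneg hv.1]
    _ = fejer h η := by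
        rw [intervalIntegral.integral_ofReal, intervalIntegral.integral_const_mul,
          integral_sub_mul_cos, fejer]
        ring_nf

lemma integral_fejer_mul_e {h : ℝ} (hh : 0 < h) (t : ℝ) :
    ∫ η, (fejer h η : ℂ) * e (t * η) = tent h t := by
  have hF : 𝓕 (fun t => (tent h t : ℂ)) = fun η => (fejer h η : ℂ) :=
    funext (fourier_tent hh.le)
  have hinv : 𝓕⁻ (𝓕 fun t => (tent h t : ℂ)) t = tent h t :=
    (integrable_tent h).ofReal.fourierInv_fourier_eq (hF ▸ (integrable_fejer hh).ofReal)
      (by fun_prop : Continuous fun t => (tent h t : ℂ)).continuousAt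
  rw [hF, Real.fourierInv_eq'] at hinv
  rw [← hinv]
  congr 1 with η
  rw [e, smul_eq_mul, mul_comm, RCLike.inner_apply, conj_trivial]
  push_cast
  ring_nf

section QuadraticForm

variable {ι : Type*} (s : Finset ι) (u a : ι → ℝ)

lemma norm_sum_mul_e_le (η : ℝ) : ‖∑ i ∈ s, (u i : ℂ) * e (a i * η)‖ ≤ ∑ i ∈ s, |u i| :=
  (norm_sum_le _ _).trans_eq <| Finset.sum_congr rfl fun i _ => by
    rw [norm_mul, Complex.norm_real, norm_e, mul_one, Real.norm_eq_abs]

lemma integrable_fejer_mul_norm_sq_sum {h : ℝ} (hh : 0 < h) :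
    Integrable fun η => fejer h η * ‖∑ i ∈ s, (u i : ℂ) * e (a i * η)‖ ^ 2 :=
  (integrable_fejer hh).mul_bdd (by fun_prop : Continuous _).aestronglyMeasurable
    (.of_forall fun η => by
      rw [norm_pow, norm_norm]
      exact pow_le_pow_left₀ (norm_nonneg _) (norm_sum_mul_e_le s u a η) 2)

lemma integral_fejer_mul_norm_sq_sum {h : ℝ} (hh : 0 < h) :
    ∫ η, fejer h η * ‖∑ i ∈ s, (u i : ℂ) * e (a i * η)‖ ^ 2 =
      ∑ i ∈ s, ∑ j ∈ s, u i * u j * tent h (a i - a j) := by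
  have hexpand (η : ℝ) : ((fejer h η * ‖∑ i ∈ s, (u i : ℂ) * e (a i * η)‖ ^ 2 : ℝ) : ℂ) =
      ∑ i ∈ s, ∑ j ∈ s, (u i * u j : ℂ) * ((fejer h η : ℂ) * e ((a i - a j) * η)) := by
    push_cast
    rw [← Complex.mul_conj', map_sum, Finset.sum_mul_sum, Finset.mul_sum]
    refine Finset.sum_congr rfl fun i _ => ?_
    rw [Finset.mul_sum]
    refine Finset.sum_congr rfl fun j _ => ?_
    rw [map_mul, Complex.conj_ofReal, sub_mul, ← e_mul_conj_e]
    ring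
  have hint (t : ℝ) : Integrable fun η => (fejer h η : ℂ) * e (t * η) :=
    (integrable_fejer hh).ofReal.mul_bdd (by fun_prop : Continuous _).aestronglyMeasurable
      (.of_forall fun η => (norm_e _).le)
  apply Complex.ofReal_injective
  rw [← integral_complex_ofReal]
  simp_rw [hexpand]
  rw [integral_finsetSum _ fun i _ => integrable_finsetSum _ fun j _ => (hint _).const_mul _]
  push_cast
  refine Finset.sum_congr rfl fun i _ => ?_
  rw [integral_finsetSum _ fun j _ => (hint _).const_mul _]
  refine Finset.sum_congr rfl fun j _ => ?_
  rw [integral_const_mul, integral_fejer_mul_e hh]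

lemma sum_filter_window_eq (h x : ℝ) :
    ∑ i ∈ s with x < a i ∧ a i ≤ x + h, u i =
      ∑ i ∈ s, u i * (Set.Ico (a i - h) (a i)).indicator 1 x := by
  rw [Finset.sum_filter]
  refine Finset.sum_congr rfl fun i _ => ?_
  by_cases hx : x ∈ Set.Ico (a i - h) (a i)
  · rw [Set.indicator_of_mem hx, if_pos ⟨hx.2, by linarith [hx.1]⟩, Pi.one_apply, mul_one]
  · rw [Set.indicator_of_notMem hx, if_neg fun hw => hx ⟨by linarith [hw.2], hw.1⟩, mul_zero]

lemma integral_sq_sum_filter_window (h : ℝ) :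
    ∫ x, (∑ i ∈ s with x < a i ∧ a i ≤ x + h, u i) ^ 2 =
      ∑ i ∈ s, ∑ j ∈ s, u i * u j * tent h (a i - a j) := by
  set I : ι → Set ℝ := fun i => Set.Ico (a i - h) (a i)
  have hexpand (x : ℝ) : (∑ i ∈ s with x < a i ∧ a i ≤ x + h, u i) ^ 2 =
      ∑ i ∈ s, ∑ j ∈ s, u i * u j * (I i ∩ I j).indicator 1 x := by
    rw [sum_filter_window_eq, sq, Finset.sum_mul_sum]
    simp only [Set.inter_indicator_one, Pi.mul_apply]
    refine Finset.sum_congr rfl fun i _ => Finset.sum_congr rfl fun j _ => ?_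
    ring
  have hint (i j : ι) : Integrable fun x => u i * u j * (I i ∩ I j).indicator 1 x := by
    refine Integrable.const_mul ?_ _
    rw [show I i ∩ I j = _ from Set.Ico_inter_Ico]
    exact (integrable_indicator_iff measurableSet_Ico).2
      (integrableOn_const measure_Ico_lt_top.ne)
  simp_rw [hexpand]
  rw [integral_finsetSum _ fun i _ => integrable_finsetSum _ fun j _ => hint i j]
  refine Finset.sum_congr rfl fun i _ => ?_
  rw [integral_finsetSum _ fun j _ => hint i j]
  refine Finset.sum_congr rfl fun j _ => ?_
  rw [integral_const_mul, integral_indicator_one (measurableSet_Ico.inter measurableSet_Ico),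
    volume_real_Ico_inter_Ico]

end QuadraticForm

lemma integral_norm_sq_le_integral_fejer_mul {E : Type*} [NormedAddCommGroup E] {F : ℝ → E}
    (hF : Continuous F) {κ : ℝ} (hκ : 0 < κ)
    (hint : Integrable fun η => fejer (1 / (2 * κ)) η * ‖F η‖ ^ 2) :
    ∫ η in (-κ)..κ, ‖F η‖ ^ 2 ≤ (π * κ) ^ 2 * ∫ η, fejer (1 / (2 * κ)) η * ‖F η‖ ^ 2 := by
  calc ∫ η in (-κ)..κ, ‖F η‖ ^ 2
      ≤ ∫ η in (-κ)..κ, (π * κ) ^ 2 * (fejer (1 / (2 * κ)) η * ‖F η‖ ^ 2) := by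
        refine intervalIntegral.integral_mono_on (by linarith)
          (Continuous.intervalIntegrable (by fun_prop) _ _)
          (hint.const_mul _).intervalIntegrable fun η hη => ?_
        have := one_le_pi_mul_sq_mul_fejer hκ (abs_le.2 hη)
        nlinarith [sq_nonneg ‖F η‖]
    _ = (π * κ) ^ 2 * ∫ η in (-κ)..κ, fejer (1 / (2 * κ)) η * ‖F η‖ ^ 2 :=
        intervalIntegral.integral_const_mul _ _
    _ ≤ (π * κ) ^ 2 * ∫ η, fejer (1 / (2 * κ)) η * ‖F η‖ ^ 2 := by
        rw [intervalIntegral.integral_of_le (by linarith)]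
        exact mul_le_mul_of_nonneg_left (setIntegral_le_integral hint
          (.of_forall fun η => mul_nonneg (fejer_nonneg _ _) (sq_nonneg _))) (sq_nonneg _)

/-- Gallagher's lemma: for real u_1,…,u_N and κ > 0,
∫_{-κ}^{κ} |Σ_n u_n e(nη)|² dη ≪ ∫_{-∞}^{∞} |κ Σ_{x<n≤x+1/(2κ)} u_n|² dx,
with an absolute implied constant. -/
theorem gallagher_lemma :
    ∃ C : ℝ, ∀ (N : ℕ) (u : ℕ → ℝ) (κ : ℝ), 0 < κ →
      (∫ η in (-κ)..κ,
          (‖∑ n ∈ Finset.range (N + 1), (u n : ℂ) * e (n * η)‖) ^ 2) ≤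
        C * ∫ x : ℝ,
          (κ * ∑ n ∈ (Finset.range (N + 1)).filter
              (fun n : ℕ => x < (n : ℝ) ∧ (n : ℝ) ≤ x + 1 / (2 * κ)), u n) ^ 2 := by
  refine ⟨π ^ 2, fun N u κ hκ => ?_⟩
  have hh : 0 < 1 / (2 * κ) := by positivity
  calc _ ≤ (π * κ) ^ 2 * ∫ η, fejer (1 / (2 * κ)) η *
          ‖∑ n ∈ Finset.range (N + 1), (u n : ℂ) * e (n * η)‖ ^ 2 :=
        integral_norm_sq_le_integral_fejer_mul (by fun_prop) hκ
          (integrable_fejer_mul_norm_sq_sum _ u _ hh)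
    _ = (π * κ) ^ 2 * ∑ m ∈ Finset.range (N + 1), ∑ n ∈ Finset.range (N + 1),
          u m * u n * tent (1 / (2 * κ)) (m - n) := by
        rw [integral_fejer_mul_norm_sq_sum _ u _ hh]
    _ = _ := by
        simp_rw [mul_pow]
        rw [integral_const_mul, integral_sq_sum_filter_window _ u (fun n : ℕ => (n : ℝ))]
        ring
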